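/- Let X be a nonnegative random variable with essential supremum M < ∞, g a distortion function, η ∈ [0, M], and π₀ a real number with E^g[R_η(X)] < π₀ ≤ E^g[X], where R_η(x) = min{x, η}. Then q* := max{ q ∈ [η, M) : E^g[R_{η,q}(X)] = π₀ } is well defined (the set is nonempty and its supremum is attained and lies in [η, M)), and R_{η,q*} is an optimal solution of the problem of maximizing ℙ(R(X) ≤ η) over all R ∈ 𝓡 subject to E^g[R(X)] = π₀; the optimal value equals F_X(q*) = ℙ(R_{η,q*}(X) ≤ η). -/

import Mathlib

/-!
Write `h(z) = g(1 - F_X(z))` and `ψ(t) = ∫_t^∞ h`. Capping `X` by the layer contract only cuts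
`h` out on `(η, q]`, so `E^g[R_{η,q}(X)] = ∫_0^η h + ψ(q)` for `q ≥ η`; with `q = M` this is
`E^g[min(X, η)]`, with `q = η` it is `E^g[X]`. As `0 ≤ h ≤ 1`, `ψ` is antitone and 1-Lipschitz
with `ψ(M) = 0`, so the intermediate value theorem and compactness of the level set give the
largest `q* ∈ [η, M)` with premium `π₀`. A retention `R ∈ 𝓡` with `R(x) ≤ η` lies below
`R_{η,x}` on `[0, ∞)`; if `R(X(ω)) ≤ η` for some `X(ω) > q*`, the premium of `R` would be at most
`∫_0^η h + ψ(X(ω)) < π₀`. Hence `{R(X) ≤ η} ⊆ {X ≤ q*}`.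
-/

open MeasureTheory

/-- A distortion function: increasing `g : [0,1] → [0,1]` with `g 0 = 0` and `g 1 = 1`. -/
def IsDistortion (g : ℝ → ℝ) : Prop :=
  MonotoneOn g (Set.Icc 0 1) ∧ (∀ x ∈ Set.Icc (0:ℝ) 1, g x ∈ Set.Icc (0:ℝ) 1) ∧
    g 0 = 0 ∧ g 1 = 1

/-- The cdf of a real random variable `Z` under `P`. -/
noncomputable def cdfOf {Ω : Type*} [MeasurableSpace Ω] (P : Measure Ω) (Z : Ω → ℝ) :
    ℝ → ℝ := fun z => (P {ω | Z ω ≤ z}).toReal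

/-- Distorted expectation `E^g[Z] = ∫_0^∞ g(1 − F_Z(z)) dz` of a nonnegative random
variable `Z`. -/
noncomputable def distExp {Ω : Type*} [MeasurableSpace Ω] (g : ℝ → ℝ) (P : Measure Ω)
    (Z : Ω → ℝ) : ℝ := ∫ z in Set.Ioi (0 : ℝ), g (1 - cdfOf P Z z)

/-- The retained loss function `R_{η,q}`: `x` on `[0,η]`, `η` on `(η,q]`, `η + x − q` beyond. -/
noncomputable def Rfun (η q : ℝ) : ℝ → ℝ := fun x =>
  if x ≤ η then x else if x ≤ q then η else η + x - q

/-- A retained loss function: `R(0) = 0`, with both `R` and `x ↦ x − R(x)` increasing on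
`[0,∞)`. -/
def IsRetention (R : ℝ → ℝ) : Prop :=
  R 0 = 0 ∧ MonotoneOn R (Set.Ici 0) ∧ MonotoneOn (fun x => x - R x) (Set.Ici 0)

open Set

section Cdf

variable {Ω : Type*} [MeasurableSpace Ω] (P : Measure Ω)

lemma cdfOf_nonneg (Y : Ω → ℝ) (z : ℝ) : 0 ≤ cdfOf P Y z := ENNReal.toReal_nonneg

lemma cdfOf_le_one [IsProbabilityMeasure P] (Y : Ω → ℝ) (z : ℝ) : cdfOf P Y z ≤ 1 :=
  ENNReal.toReal_le_of_le_ofReal zero_le_one (by simpa using prob_le_one)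

lemma one_sub_cdfOf_mem_Icc [IsProbabilityMeasure P] (Y : Ω → ℝ) (z : ℝ) :
    1 - cdfOf P Y z ∈ Icc (0 : ℝ) 1 :=
  ⟨by linarith [cdfOf_le_one P Y z], by linarith [cdfOf_nonneg P Y z]⟩

lemma cdfOf_mono [IsFiniteMeasure P] (Y : Ω → ℝ) : Monotone (cdfOf P Y) := fun _ _ hab =>
  ENNReal.toReal_mono (measure_ne_top P _) (measure_mono fun _ h => le_trans h hab)

lemma cdfOf_eq_one_of_ae_le [IsProbabilityMeasure P] {Y : Ω → ℝ} {c z : ℝ}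
    (hc : ∀ᵐ ω ∂P, Y ω ≤ c) (hz : c ≤ z) : cdfOf P Y z = 1 := by
  have hfull : {ω | Y ω ≤ z} =ᵐ[P] (univ : Set Ω) :=
    ae_eq_univ.2 <| measure_mono_null
      (fun ω (hω : ¬ Y ω ≤ z) (h : Y ω ≤ c) => hω (h.trans hz)) (ae_iff.1 hc)
  simp [cdfOf, measure_congr hfull]

lemma cdfOf_congr_ae {Y₁ Y₂ : Ω → ℝ} (h : Y₁ =ᵐ[P] Y₂) : cdfOf P Y₁ = cdfOf P Y₂ := by
  funext z
  exact congrArg ENNReal.toReal <| measure_congr <|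
    h.mono fun ω hω => show (Y₁ ω ≤ z) = (Y₂ ω ≤ z) by rw [hω]

end Cdf

noncomputable def distSurv {Ω : Type*} [MeasurableSpace Ω] (g : ℝ → ℝ) (P : Measure Ω)
    (Y : Ω → ℝ) : ℝ → ℝ := fun z => g (1 - cdfOf P Y z)

noncomputable def distTail {Ω : Type*} [MeasurableSpace Ω] (g : ℝ → ℝ) (P : Measure Ω)
    (Y : Ω → ℝ) (t : ℝ) : ℝ := ∫ z in Ioi t, distSurv g P Y z

section DistortedSurvival

variable {Ω : Type*} [MeasurableSpace Ω] (P : Measure Ω) [IsProbabilityMeasure P]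
  {g : ℝ → ℝ} {Y : Ω → ℝ} {c : ℝ}

lemma distSurv_mem_Icc (hg : IsDistortion g) (Y : Ω → ℝ) (z : ℝ) :
    distSurv g P Y z ∈ Icc (0 : ℝ) 1 :=
  hg.2.1 _ (one_sub_cdfOf_mem_Icc P Y z)

lemma distSurv_antitone (hg : IsDistortion g) (Y : Ω → ℝ) : Antitone (distSurv g P Y) :=
  fun a b hab => hg.1 (one_sub_cdfOf_mem_Icc P Y b) (one_sub_cdfOf_mem_Icc P Y a)
    (sub_le_sub_left (cdfOf_mono P Y hab) 1)

lemma distSurv_eq_zero (hg : IsDistortion g) (hc : ∀ᵐ ω ∂P, Y ω ≤ c) {z : ℝ} (hz : c ≤ z) :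
    distSurv g P Y z = 0 := by
  rw [distSurv, cdfOf_eq_one_of_ae_le P hc hz, sub_self, hg.2.2.1]

lemma integrableOn_distSurv (hg : IsDistortion g) (hc : ∀ᵐ ω ∂P, Y ω ≤ c) (a : ℝ) :
    IntegrableOn (distSurv g P Y) (Ioi a) := by
  have hIcc : IntegrableOn (distSurv g P Y) (Icc a c) :=
    (distSurv_antitone P hg Y).locallyIntegrable.integrableOn_isCompact isCompact_Icc
  have hIoi : IntegrableOn (distSurv g P Y) (Ioi c) :=
    integrableOn_zero.congr_fun (fun z hz => (distSurv_eq_zero P hg hc (le_of_lt hz)).symm)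
      measurableSet_Ioi
  refine (hIcc.union hIoi).mono_set fun z hz => ?_
  rcases le_or_gt z c with h | h
  exacts [Or.inl ⟨le_of_lt hz, h⟩, Or.inr h]

lemma distTail_sub_distTail (hg : IsDistortion g) (hc : ∀ᵐ ω ∂P, Y ω ≤ c) {a b : ℝ}
    (hab : a ≤ b) : distTail g P Y a - distTail g P Y b = ∫ z in a..b, distSurv g P Y z :=
  intervalIntegral.integral_Ioi_sub_Ioi (integrableOn_distSurv P hg hc a) hab

lemma distTail_antitone (hg : IsDistortion g) (hc : ∀ᵐ ω ∂P, Y ω ≤ c) :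
    Antitone (distTail g P Y) := fun a b hab => by
  have hsplit := distTail_sub_distTail P hg hc hab
  have hnonneg : 0 ≤ ∫ z in a..b, distSurv g P Y z :=
    intervalIntegral.integral_nonneg hab fun z _ => (distSurv_mem_Icc P hg Y z).1
  linarith

lemma distTail_le_add (hg : IsDistortion g) (hc : ∀ᵐ ω ∂P, Y ω ≤ c) {a b : ℝ} (hab : a ≤ b) :
    distTail g P Y a ≤ distTail g P Y b + (b - a) := by
  have hsplit := distTail_sub_distTail P hg hc hab
  have hle : ∫ z in a..b, distSurv g P Y z ≤ ∫ z in a..b, (1 : ℝ) :=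
    intervalIntegral.integral_mono_on hab (integrableOn_distSurv P hg hc a |>.mono_set
      Ioc_subset_Ioi_self |> (intervalIntegrable_iff_integrableOn_Ioc_of_le hab).2)
      intervalIntegrable_const fun z _ => (distSurv_mem_Icc P hg Y z).2
  simp only [intervalIntegral.integral_const, smul_eq_mul, mul_one] at hle
  linarith

lemma distTail_lipschitzWith (hg : IsDistortion g) (hc : ∀ᵐ ω ∂P, Y ω ≤ c) :
    LipschitzWith 1 (distTail g P Y) := by
  refine LipschitzWith.of_le_add fun a b => ?_
  rcases le_total a b with hab | hba
  · have : b - a ≤ dist a b := by rw [dist_comm, Real.dist_eq]; exact le_abs_self _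
    linarith [distTail_le_add P hg hc hab]
  · linarith [distTail_antitone P hg hc hba, dist_nonneg (x := a) (y := b)]

lemma distTail_eq_zero (hg : IsDistortion g) (hc : ∀ᵐ ω ∂P, Y ω ≤ c) {t : ℝ} (ht : c ≤ t) :
    distTail g P Y t = 0 := by
  rw [distTail, setIntegral_congr_fun measurableSet_Ioi
    fun z hz => distSurv_eq_zero P hg hc (ht.trans (le_of_lt hz))]
  simp

lemma distExp_mono (hg : IsDistortion g) {Y₁ Y₂ : Ω → ℝ} (h₁₂ : ∀ ω, Y₁ ω ≤ Y₂ ω)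
    (hc : ∀ᵐ ω ∂P, Y₂ ω ≤ c) : distExp g P Y₁ ≤ distExp g P Y₂ := by
  have hc₁ : ∀ᵐ ω ∂P, Y₁ ω ≤ c := hc.mono fun ω h => (h₁₂ ω).trans h
  refine setIntegral_mono_on (integrableOn_distSurv P hg hc₁ 0)
    (integrableOn_distSurv P hg hc 0) measurableSet_Ioi fun z _ => ?_
  refine hg.1 (one_sub_cdfOf_mem_Icc P Y₁ z) (one_sub_cdfOf_mem_Icc P Y₂ z) ?_
  exact sub_le_sub_left (ENNReal.toReal_mono (measure_ne_top P _)
    (measure_mono fun ω (h : Y₂ ω ≤ z) => (h₁₂ ω).trans h)) 1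

end DistortedSurvival

lemma distExp_congr_ae {Ω : Type*} [MeasurableSpace Ω] (g : ℝ → ℝ) (P : Measure Ω)
    {Y₁ Y₂ : Ω → ℝ} (h : Y₁ =ᵐ[P] Y₂) : distExp g P Y₁ = distExp g P Y₂ := by
  rw [distExp, distExp, cdfOf_congr_ae P h]

section Layer

variable {η q x z : ℝ}

lemma Rfun_le_iff_of_lt (hz : z < η) : Rfun η q x ≤ z ↔ x ≤ z := by
  unfold Rfun
  split_ifs <;> constructor <;> intro <;> linarith

lemma Rfun_le_iff_of_le (hq : η ≤ q) (hz : η ≤ z) : Rfun η q x ≤ z ↔ x ≤ z + (q - η) := by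
  unfold Rfun
  split_ifs <;> constructor <;> intro <;> linarith

lemma Rfun_le_self (hq : η ≤ q) : Rfun η q x ≤ x := by
  unfold Rfun
  split_ifs <;> linarith

lemma Rfun_eq_min (hx : x ≤ q) : Rfun η q x = min x η := by
  unfold Rfun
  split_ifs <;> grind

lemma Rfun_self (η x : ℝ) : Rfun η η x = x := by
  unfold Rfun
  split_ifs <;> linarith

end Layer

lemma setIntegral_Ioi_comp_add_right (f : ℝ → ℝ) (a c : ℝ) :
    ∫ z in Ioi a, f (z + c) = ∫ z in Ioi (a + c), f z := by
  rw [← (measurePreserving_add_right volume c).setIntegral_image_emb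
    (MeasurableEquiv.addRight c).measurableEmbedding f (Ioi a), image_add_const_Ioi]

lemma distExp_Rfun_comp {Ω : Type*} [MeasurableSpace Ω] (P : Measure Ω)
    [IsProbabilityMeasure P] {g : ℝ → ℝ} (hg : IsDistortion g) {X : Ω → ℝ} {M : ℝ}
    (hM : ∀ᵐ ω ∂P, X ω ≤ M) {η q : ℝ} (hη : 0 ≤ η) (hq : η ≤ q) :
    distExp g P (fun ω => Rfun η q (X ω)) =
      (∫ z in (0 : ℝ)..η, distSurv g P X z) + distTail g P X q := by
  set Y := fun ω => Rfun η q (X ω)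
  have hY : ∀ᵐ ω ∂P, Y ω ≤ M := hM.mono fun ω h => Rfun_le_self hq |>.trans h
  have hlow : ∫ z in (0 : ℝ)..η, distSurv g P Y z = ∫ z in (0 : ℝ)..η, distSurv g P X z := by
    refine intervalIntegral.integral_congr_ae ?_
    filter_upwards [Measure.ae_ne volume η] with z hzη hz
    have hzlt : z < η := lt_of_le_of_ne (uIoc_of_le hη ▸ hz).2 hzη
    simp only [distSurv, cdfOf, Y, Rfun_le_iff_of_lt hzlt]
  have hhigh : distTail g P Y η = distTail g P X q := by
    calc distTail g P Y η = ∫ z in Ioi η, distSurv g P X (z + (q - η)) :=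
          setIntegral_congr_fun measurableSet_Ioi fun z hz => by
            simp only [distSurv, cdfOf, Y, Rfun_le_iff_of_le hq (le_of_lt hz)]
      _ = distTail g P X q := by
          rw [distTail, setIntegral_Ioi_comp_add_right, add_sub_cancel]
  rw [← hlow, ← hhigh]
  exact (intervalIntegral.integral_interval_add_Ioi
    (integrableOn_distSurv P hg hY 0) (integrableOn_distSurv P hg hY η)).symm

lemma exists_isGreatest_level_Ico {ψ : ℝ → ℝ} (hψ : Continuous ψ) {a b c : ℝ} (hab : a ≤ b)
    (hb : ψ b < c) (ha : c ≤ ψ a) : ∃ q, IsGreatest {q | q ∈ Ico a b ∧ ψ q = c} q := by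
  have hlevel : {q | q ∈ Ico a b ∧ ψ q = c} = Icc a b ∩ ψ ⁻¹' {c} := by
    ext q
    simp only [mem_ofPred_eq, mem_inter_iff, mem_preimage, mem_singleton_iff, mem_Ico, mem_Icc]
    constructor
    · rintro ⟨⟨haq, hqb⟩, hq⟩
      exact ⟨⟨haq, le_of_lt hqb⟩, hq⟩
    · rintro ⟨⟨haq, hqb⟩, hq⟩
      exact ⟨⟨haq, lt_of_le_of_ne hqb fun h => by subst h; linarith⟩, hq⟩
  obtain ⟨q, hq, hqc⟩ := intermediate_value_Icc' hab hψ.continuousOn ⟨le_of_lt hb, ha⟩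
  rw [hlevel]
  exact (isCompact_Icc.inter_right (isClosed_singleton.preimage hψ)).exists_isGreatest
    ⟨q, hq, hqc⟩

lemma lt_of_isGreatest_level_Ico {ψ : ℝ → ℝ} (hψ : Antitone ψ) {a b c q x : ℝ}
    (hb : ψ b < c) (hq : IsGreatest {q | q ∈ Ico a b ∧ ψ q = c} q) (hx : q < x) : ψ x < c := by
  by_contra! hcx
  rcases lt_or_ge x b with hxb | hbx
  · have hxq : ψ x ≤ ψ q := hψ (le_of_lt hx)
    have hxS : x ∈ {q | q ∈ Ico a b ∧ ψ q = c} :=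
      ⟨⟨hq.1.1.1.trans (le_of_lt hx), hxb⟩, le_antisymm (hxq.trans_eq hq.1.2) hcx⟩
    exact absurd (hq.2 hxS) (not_le.2 hx)
  · linarith [hψ hbx]

namespace IsRetention

variable {R : ℝ → ℝ} {x y : ℝ}

lemma le_self (hR : IsRetention R) (hx : 0 ≤ x) : R x ≤ x := by
  have := hR.2.2 (mem_Ici.2 le_rfl) (mem_Ici.2 hx) hx
  simp only [hR.1, sub_zero] at this
  linarith

lemma le_add_sub (hR : IsRetention R) (hy : 0 ≤ y) (hyx : y ≤ x) : R x ≤ R y + (x - y) := by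
  have := hR.2.2 (mem_Ici.2 hy) (mem_Ici.2 (hy.trans hyx)) hyx
  simp only at this
  linarith

lemma le_Rfun (hR : IsRetention R) {η q : ℝ} (hq : 0 ≤ q) (hRq : R q ≤ η) (hx : 0 ≤ x) :
    R x ≤ Rfun η q x := by
  unfold Rfun
  split_ifs with hxη hxq
  · exact hR.le_self hx
  · exact (hR.2.1 (mem_Ici.2 hx) (mem_Ici.2 hq) hxq).trans hRq
  · linarith [hR.le_add_sub hq (le_of_lt (not_le.1 hxq))]

end IsRetention

theorem layer_optimal_large_premium_general {Ω : Type*} [MeasurableSpace Ω]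
    (P : Measure Ω) [IsProbabilityMeasure P]
    (X : Ω → ℝ) (hXnn : ∀ ω, 0 ≤ X ω)
    (M : ℝ) (hMbound : ∀ᵐ ω ∂P, X ω ≤ M)
    (g : ℝ → ℝ) (hg : IsDistortion g)
    (η : ℝ) (hη : η ∈ Set.Icc (0 : ℝ) M)
    (π₀ : ℝ) (hπ₀lb : distExp g P (fun ω => min (X ω) η) < π₀)
    (hπ₀ub : π₀ ≤ distExp g P X) :
    ∃ qs : ℝ,
      IsGreatest {q : ℝ | q ∈ Set.Ico η M ∧
        distExp g P (fun ω => Rfun η q (X ω)) = π₀} qs ∧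
      (P {ω | Rfun η qs (X ω) ≤ η}).toReal = cdfOf P X qs ∧
      ∀ R : ℝ → ℝ, IsRetention R → distExp g P (fun ω => R (X ω)) = π₀ →
        (P {ω | R (X ω) ≤ η}).toReal ≤ cdfOf P X qs := by
  obtain ⟨hη0, hηM⟩ := hη
  set A := ∫ z in (0 : ℝ)..η, distSurv g P X z
  set ψ := distTail g P X
  have hRψ : ∀ q, η ≤ q → distExp g P (fun ω => Rfun η q (X ω)) = A + ψ q :=
    fun q hq => distExp_Rfun_comp P hg hMbound hη0 hq
  have hψM : ψ M = 0 := distTail_eq_zero P hg hMbound le_rfl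
  have hminA : distExp g P (fun ω => min (X ω) η) = A := by
    rw [distExp_congr_ae g P (hMbound.mono fun ω h => (Rfun_eq_min h).symm), hRψ M hηM, hψM,
      add_zero]
  have hψMlt : ψ M < π₀ - A := by linarith
  have hXψ : distExp g P X = A + ψ η := by simpa only [Rfun_self] using hRψ η le_rfl
  have hS : {q | q ∈ Ico η M ∧ distExp g P (fun ω => Rfun η q (X ω)) = π₀} =
      {q | q ∈ Ico η M ∧ ψ q = π₀ - A} := by
    ext q
    exact and_congr_right fun hq => by rw [hRψ q hq.1]; constructor <;> intro <;> linarith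
  obtain ⟨qs, hqs⟩ := exists_isGreatest_level_Ico (distTail_lipschitzWith P hg hMbound).continuous
    hηM hψMlt (by linarith)
  refine ⟨qs, hS ▸ hqs, ?_, fun R hR hRπ => ?_⟩
  · congr
    ext ω
    exact (Rfun_le_iff_of_le hqs.1.1.1 le_rfl).trans (by rw [add_sub_cancel])
  refine ENNReal.toReal_mono (measure_ne_top _ _) (measure_mono fun ω (hω : R (X ω) ≤ η) => ?_)
  by_contra hout
  have hlt : qs < X ω := not_le.1 hout
  have hηx : η ≤ X ω := hqs.1.1.1.trans (le_of_lt hlt)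
  have hle := distExp_mono P hg (fun ω' => hR.le_Rfun (hXnn ω) hω (hXnn ω'))
    (hMbound.mono fun ω' h => (Rfun_le_self hηx).trans h)
  rw [hRπ, hRψ _ hηx] at hle
  linarith [lt_of_isGreatest_level_Ico (distTail_antitone P hg hMbound) hψMlt hqs hlt]

/-- **Proposition 3.2.** If `E^g[R_η(X)] < π₀ ≤ E^g[X]`, then
`q* = max{ q ∈ [η, M) : E^g[R_{η,q}(X)] = π₀ }` is well defined, and `R_{η,q*}` is optimal for
maximizing `ℙ(R(X) ≤ η)` over `R ∈ 𝓡` with `E^g[R(X)] = π₀`; the optimal value is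
`F_X(q*) = ℙ(R_{η,q*}(X) ≤ η)`. -/
theorem layer_optimal_large_premium {Ω : Type*} [MeasurableSpace Ω]
    (P : Measure Ω) [IsProbabilityMeasure P]
    (X : Ω → ℝ) (hX : Measurable X) (hXnn : ∀ ω, 0 ≤ X ω)
    (M : ℝ) (hMbound : ∀ᵐ ω ∂P, X ω ≤ M)
    (hMleast : ∀ M' : ℝ, (∀ᵐ ω ∂P, X ω ≤ M') → M ≤ M')
    (g : ℝ → ℝ) (hg : IsDistortion g)
    (η : ℝ) (hη : η ∈ Set.Icc (0 : ℝ) M)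
    (π₀ : ℝ) (hπ₀lb : distExp g P (fun ω => min (X ω) η) < π₀)
    (hπ₀ub : π₀ ≤ distExp g P X) :
    ∃ qs : ℝ,
      IsGreatest {q : ℝ | q ∈ Set.Ico η M ∧
        distExp g P (fun ω => Rfun η q (X ω)) = π₀} qs ∧
      (P {ω | Rfun η qs (X ω) ≤ η}).toReal = cdfOf P X qs ∧
      ∀ R : ℝ → ℝ, IsRetention R → distExp g P (fun ω => R (X ω)) = π₀ →
        (P {ω | R (X ω) ≤ η}).toReal ≤ cdfOf P X qs :=
  layer_optimal_large_premium_general P X hXnn M hMbound g hg η hη π₀ hπ₀lb hπ₀ub
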